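/- arXiv:1412.5166 — 3 statements merged into one kernel-verified Lean document; each statement's English description precedes it below -/
import Mathlib

section
/- Let (C, τ) be a Grothendieck site (a 1-category with a Grothendieck topology) and let D be an (n+1,1)-category for some n ≥ 0. Then a functor F: Cᵒᵖ → D satisfies descent for τ-coverings if and only if it satisfies descent for τ-hypercoverings. -/
/-!
STATEMENT 0: Let (C, τ) be a Grothendieck site and let D be an (n+1,1)-category.
Then a functor F : Cᵒᵖ → D satisfies descent for τ-coverings (i.e. is a sheaf)
if and only if it satisfies descent for τ-hypercoverings.
In the 1-categorical formalization, values lie in an arbitrary category `D`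
(i.e. a (1,1)-category) and hyperdescent is expressed via 1-hypercovers:
`F` is a sheaf iff for every 1-hypercover `E`, the multifork of `E` is a limit. -/

open CategoryTheory Limits

universe w v v' u u'

theorem descent_for_coverings_iff_descent_for_hypercoverings
    {C : Type u} [Category.{v} C] (J : GrothendieckTopology C)
    {D : Type u'} [Category.{v'} D] (F : Cᵒᵖ ⥤ D) :
    Presheaf.IsSheaf J F ↔
      ∀ ⦃X : C⦄ (E : GrothendieckTopology.OneHypercover.{max u v} J X),
        Nonempty (IsLimit (E.multifork F)) := by
  exact Presheaf.isSheaf_iff_of_isGeneratedByOneHypercovers.{max u v} J F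
end

section
/- Let u: C → D be a cocontinuous functor between Grothendieck sites. Then the right Kan extension functor along u, denoted _p u: PSh(C) → PSh(D), sends τ-sheaves on C to σ-sheaves on D. -/
/-!
STATEMENT 7: Let u : C → D be a cocontinuous functor between Grothendieck sites.
Then the right Kan extension along u, _p u = u.op.ran : PSh(C) → PSh(D), sends
τ-sheaves on C to σ-sheaves on D. -/

open CategoryTheory Limits

universe v' u' u

theorem ran_of_cocontinuous_preserves_sheaves
    {C D : Type u} [SmallCategory C] [SmallCategory D] (u : C ⥤ D)
    (J : GrothendieckTopology C) (K : GrothendieckTopology D)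
    [Functor.IsCocontinuous u J K]
    {A : Type u'} [Category.{v'} A]
    [∀ (F : Cᵒᵖ ⥤ A), u.op.HasPointwiseRightKanExtension F]
    (F : Sheaf J A) :
    Presheaf.IsSheaf K (u.op.ran.obj F.val) := by
  exact ran_isSheaf_of_isCocontinuous u K F
end

section
/- Let f: Y → S and g: V → Y be continuous maps of Hausdorff topological spaces. Let W ⊆ Y be an open subset whose closure W̄ is proper over S, and let U ⊆ V be an open subset whose closure Ū is proper over Y. Then the closure of U ∩ g⁻¹(W) in V is proper over S (via f ∘ g). -/
open Set

section

variable {X Y : Type*} [TopologicalSpace X] [TopologicalSpace Y]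

lemma isProperMap_inclusion {s t : Set X} (hst : s ⊆ t) (hs : IsClosed s) :
    IsProperMap (inclusion hst) :=
  isProperMap_of_comp_of_inj (continuous_inclusion hst) continuous_subtype_val
    hs.isProperMap_subtypeVal Subtype.val_injective

lemma IsProperMap.domRestrict_of_subset {f : X → Y} {s t : Set X} (hst : s ⊆ t) (hs : IsClosed s)
    (hf : IsProperMap (t.domRestrict f)) : IsProperMap (s.domRestrict f) :=
  hf.comp (isProperMap_inclusion hst hs)

lemma IsProperMap.codRestrict {f : X → Y} {t : Set Y} (hf : IsProperMap f) (h : ∀ x, f x ∈ t) :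
    IsProperMap (t.codRestrict f h) :=
  isProperMap_of_comp_of_inj (hf.continuous.codRestrict h) continuous_subtype_val hf
    Subtype.val_injective

lemma IsProperMap.mapsToRestrict_of_subset {f : X → Y} {s t : Set X} {u : Set Y} (hst : s ⊆ t)
    (hs : IsClosed s) (hf : IsProperMap (t.domRestrict f)) (hsu : MapsTo f s u) :
    IsProperMap (hsu.restrict f s u) :=
  (hf.domRestrict_of_subset hst hs).codRestrict fun x ↦ hsu x.2

end

theorem closure_inter_preimage_proper_comp_general
    {V Y S : Type*} [TopologicalSpace V] [TopologicalSpace Y] [TopologicalSpace S]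
    (g : V → Y) (hgc : Continuous g)
    (f : Y → S)
    (W : Set Y)
    (hWproper : IsProperMap (fun y : closure W => f y.1))
    (U : Set V)
    (hUproper : IsProperMap (fun v : closure U => g v.1)) :
    IsProperMap (fun z : closure (U ∩ g ⁻¹' W) => f (g z.1)) := by
  have hmaps : MapsTo g (closure (U ∩ g ⁻¹' W)) (closure W) :=
    (mapsTo_preimage g W).mono_left inter_subset_right |>.closure hgc
  exact hWproper.comp <| hUproper.mapsToRestrict_of_subset
    (closure_mono inter_subset_left) isClosed_closure hmaps

theorem closure_inter_preimage_proper_comp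
    {V Y S : Type*} [TopologicalSpace V] [TopologicalSpace Y] [TopologicalSpace S]
    [T2Space V] [T2Space Y] [T2Space S]
    (g : V → Y) (hgc : Continuous g)
    (f : Y → S) (hfc : Continuous f)
    (W : Set Y) (hW : IsOpen W)
    (hWproper : IsProperMap (fun y : closure W => f y.1))
    (U : Set V) (hU : IsOpen U)
    (hUproper : IsProperMap (fun v : closure U => g v.1)) :
    IsProperMap (fun z : closure (U ∩ g ⁻¹' W) => f (g z.1)) :=
  closure_inter_preimage_proper_comp_general g hgc f W hWproper U hUproper
end
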